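/- arXiv:2101.05514 — 3 statements merged into one kernel-verified Lean document; each statement's English description precedes it below -/
import Mathlib

section
/- The ℝ^{2×2}-matrix-valued kernel on ℝ defined by K(x,z) = [[xz, xz²],[x²z, x²z²]] is a positive semi-definite operator-valued kernel (it is transformable with transformations S₁(x)=x, S₂(x)=x² and base kernel k(x,z)=xz), but it cannot be written in separable form K(x,z) = k(x,z)·T with k a scalar kernel and T a symmetric positive semi-definite 2×2 matrix. -/
/-!
`K(x,z)` is the rank-one matrix `φ(x) φ(z)ᵀ` with feature map `φ(x) = (x, x²)`, so the quadratic
form `∑ᵢⱼ ⟨yᵢ, K(xᵢ,xⱼ) yⱼ⟩` is the square `(∑ᵢ ⟨yᵢ, φ(xᵢ)⟩)²`. A separable kernel `k(x,z) • T`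
takes all its values on the line spanned by `T`, so any two of its values have proportional
entries; but `K(1,1)` has first row `(1, 1)` while `K(1,2)` has first row `(2, 4)`.
-/

open Matrix

section RankOneKernel

variable {α ι κ R : Type*} [Fintype ι] [Fintype κ]

theorem dotProduct_vecMulVec_mulVec [CommSemiring R] (y u v w : ι → R) :
    y ⬝ᵥ (vecMulVec u v *ᵥ w) = (y ⬝ᵥ u) * (v ⬝ᵥ w) := by
  rw [vecMulVec_mulVec, op_smul_eq_smul, dotProduct_smul, smul_eq_mul, mul_comm]

theorem sum_dotProduct_vecMulVec_mulVec_nonneg [CommRing R] [LinearOrder R] [IsStrictOrderedRing R]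
    (φ : α → ι → R) (x : κ → α) (y : κ → ι → R) :
    0 ≤ ∑ i, ∑ j, y i ⬝ᵥ (vecMulVec (φ (x i)) (φ (x j)) *ᵥ y j) := by
  simp_rw [dotProduct_vecMulVec_mulVec, dotProduct_comm (φ _) (y _)]
  rw [← Finset.sum_mul_sum]
  exact mul_self_nonneg _

end RankOneKernel

theorem entry_mul_entry_comm_of_eq_smul {α ι R : Type*} [CommSemiring R]
    {K : α → α → Matrix ι ι R} {k : α → α → R} {T : Matrix ι ι R}
    (hK : ∀ x z, K x z = k x z • T) (x z x' z' : α) (i j i' j' : ι) :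
    K x z i j * K x' z' i' j' = K x z i' j' * K x' z' i j := by
  simp only [hK, Matrix.smul_apply, smul_eq_mul]
  ring

/-- The transformable kernel `K(x,z) = [[xz, xz²],[x²z, x²z²]]` is a positive semi-definite
operator-valued kernel, but it is not separable. -/
theorem transformable_not_separable
    (K : ℝ → ℝ → Matrix (Fin 2) (Fin 2) ℝ)
    (hK : ∀ x z, K x z = !![x * z, x * z ^ 2; x ^ 2 * z, x ^ 2 * z ^ 2]) :
    (∀ x z, K x z = (K z x)ᵀ) ∧
    (∀ (n : ℕ) (x : Fin n → ℝ) (y : Fin n → (Fin 2 → ℝ)),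
      0 ≤ ∑ i : Fin n, ∑ j : Fin n, y i ⬝ᵥ (K (x i) (x j) *ᵥ y j)) ∧
    ¬ ∃ (k : ℝ → ℝ → ℝ) (T : Matrix (Fin 2) (Fin 2) ℝ),
        T.PosSemidef ∧ ∀ x z, K x z = k x z • T := by
  have hK_rankOne : ∀ x z, K x z = vecMulVec ![x, x ^ 2] ![z, z ^ 2] := by
    intro x z
    rw [hK]
    ext i j
    fin_cases i <;> fin_cases j <;> simp [vecMulVec_apply]
  refine ⟨fun x z => by rw [hK_rankOne, hK_rankOne, transpose_vecMulVec],
    fun n x y => by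
      simpa only [hK_rankOne] using
        sum_dotProduct_vecMulVec_mulVec_nonneg (fun t : ℝ => ![t, t ^ 2]) x y, ?_⟩
  rintro ⟨k, T, -, hsep⟩
  have h := entry_mul_entry_comm_of_eq_smul hsep 1 1 1 2 0 0 0 1
  norm_num [hK] at h
end

section
/- Entangled kernels are positive semi-definite: let T ∈ ℝ^{p×p} be symmetric positive semi-definite, U ∈ ℝ^{pN×pN} arbitrary, and φ: X → ℝ^N a feature map. Define K(x,z) = tr_{ℝ^N}(U (T ⊗ φ(x)φ(z)^⊤) U^⊤). Then K(x,z) = K(z,x)^⊤ for all x,z and for all finite sequences x₁,...,x_n ∈ X and y₁,...,y_n ∈ ℝ^p one has Σ_{i,j} ⟨y_i, K(x_i,x_j) y_j⟩ ≥ 0. -/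
/-!
Writing `T ⊗ a bᵀ = (1 ⊗ a) (T ⊗ 1) (1 ⊗ b)ᵀ` and the partial trace as the sum of the `N`
diagonal `p × p` blocks, the kernel becomes `K x z = ∑ₖ Fₖ x * T' * (Fₖ z)ᵀ`, where `Fₖ x`
is the `k`-th block row of `U (1 ⊗ φ x)` and `T' = T ⊗ 1` is positive semidefinite. Both
claims follow from this form: transposing swaps `x` and `z` because `T'` is symmetric, and
`∑ᵢⱼ yᵢ ⬝ Fₖ xᵢ T' (Fₖ xⱼ)ᵀ yⱼ = w ⬝ T' w` with `w = ∑ᵢ (Fₖ xᵢ)ᵀ yᵢ`.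
-/

open Matrix Kronecker

/-- Partial trace over the second factor: blockwise trace of a `pN × pN` block matrix. -/
def ptrace {p N : ℕ} (A : Matrix (Fin p × Fin N) (Fin p × Fin N) ℝ) :
    Matrix (Fin p) (Fin p) ℝ :=
  Matrix.of fun l m => ∑ k : Fin N, A (l, k) (m, k)

def IsPosSemidefKernel {X ι : Type*} [Fintype ι] (K : X → X → Matrix ι ι ℝ) : Prop :=
  ∀ (n : ℕ) (x : Fin n → X) (y : Fin n → ι → ℝ),
    0 ≤ ∑ i : Fin n, ∑ j : Fin n, y i ⬝ᵥ (K (x i) (x j) *ᵥ y j)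

namespace IsPosSemidefKernel

variable {X ι : Type*} [Fintype ι]

theorem sum {κ : Type*} (s : Finset κ) {K : κ → X → X → Matrix ι ι ℝ}
    (hK : ∀ k ∈ s, IsPosSemidefKernel (K k)) :
    IsPosSemidefKernel fun x z => ∑ k ∈ s, K k x z := by
  intro n x y
  simp only [sum_mulVec, dotProduct_sum]
  rw [Finset.sum_congr rfl fun i _ => Finset.sum_comm, Finset.sum_comm]
  exact Finset.sum_nonneg fun k hk => hK k hk n x y

theorem mul_mul_transpose {m : Type*} [Fintype m] {T : Matrix m m ℝ} (hT : T.PosSemidef)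
    (F : X → Matrix ι m ℝ) : IsPosSemidefKernel fun x z => F x * T * (F z)ᵀ := by
  intro n x y
  have h := hT.dotProduct_mulVec_nonneg (∑ i, (F (x i))ᵀ *ᵥ y i)
  simp only [star_trivial, mulVec_sum, dotProduct_sum, sum_dotProduct] at h
  rw [Finset.sum_comm] at h
  refine h.trans_eq (Finset.sum_congr rfl fun i _ => Finset.sum_congr rfl fun j _ => ?_)
  rw [← mulVec_mulVec, ← mulVec_mulVec, mulVec_transpose, dotProduct_mulVec (y i)]

end IsPosSemidefKernel

theorem kronecker_vecMulVec_eq {α m n : Type*} [CommSemiring α] [Fintype m] [DecidableEq m]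
    (T : Matrix m m α) (a b : n → α) :
    T ⊗ₖ vecMulVec a b
      = ((1 : Matrix m m α) ⊗ₖ replicateCol Unit a) * (T ⊗ₖ (1 : Matrix Unit Unit α)) *
          ((1 : Matrix m m α) ⊗ₖ replicateCol Unit b)ᵀ := by
  rw [← kroneckerMap_transpose, transpose_one, transpose_replicateCol, ← mul_kronecker_mul,
    ← mul_kronecker_mul, Matrix.one_mul, Matrix.mul_one, Matrix.mul_one, vecMulVec_eq Unit]

theorem ptrace_mul_mul_transpose {p N : ℕ} {m : Type*} [Fintype m]
    (P R : Matrix (Fin p × Fin N) m ℝ) (Q : Matrix m m ℝ) :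
    ptrace (P * Q * Rᵀ) = ∑ k, P.submatrix (·, k) id * Q * (R.submatrix (·, k) id)ᵀ := by
  ext l m
  simp [ptrace, Matrix.sum_apply, mul_apply]

theorem ptrace_mul_kronecker_vecMulVec_mul_transpose {p N : ℕ}
    (U : Matrix (Fin p × Fin N) (Fin p × Fin N) ℝ) (T : Matrix (Fin p) (Fin p) ℝ)
    (a b : Fin N → ℝ) :
    ptrace (U * (T ⊗ₖ vecMulVec a b) * Uᵀ)
      = ∑ k, (U * ((1 : Matrix (Fin p) (Fin p) ℝ) ⊗ₖ replicateCol Unit a)).submatrix (·, k) id *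
          (T ⊗ₖ (1 : Matrix Unit Unit ℝ)) *
          ((U * ((1 : Matrix (Fin p) (Fin p) ℝ) ⊗ₖ replicateCol Unit b)).submatrix (·, k) id)ᵀ := by
  rw [kronecker_vecMulVec_eq, ← ptrace_mul_mul_transpose, transpose_mul]
  simp only [Matrix.mul_assoc]

/-- Entangled kernels `K(x,z) = tr_{ℝᴺ}(U (T ⊗ φ(x)φ(z)ᵀ) Uᵀ)` are positive semi-definite
operator-valued kernels. -/
theorem entangled_kernel_posSemidef {X : Type*} {p N : ℕ}
    (T : Matrix (Fin p) (Fin p) ℝ) (hT : T.PosSemidef)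
    (U : Matrix (Fin p × Fin N) (Fin p × Fin N) ℝ)
    (φ : X → (Fin N → ℝ))
    (K : X → X → Matrix (Fin p) (Fin p) ℝ)
    (hK : ∀ x z, K x z = ptrace (U * (T ⊗ₖ vecMulVec (φ x) (φ z)) * Uᵀ)) :
    (∀ x z, K x z = (K z x)ᵀ) ∧
    (∀ (n : ℕ) (x : Fin n → X) (y : Fin n → (Fin p → ℝ)),
      0 ≤ ∑ i : Fin n, ∑ j : Fin n, y i ⬝ᵥ (K (x i) (x j) *ᵥ y j)) := by
  obtain ⟨T', hT', F, rfl⟩ : ∃ T' : Matrix (Fin p × Unit) (Fin p × Unit) ℝ, T'.PosSemidef ∧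
      ∃ F : Fin N → X → Matrix (Fin p) (Fin p × Unit) ℝ,
        K = fun x z => ∑ k, F k x * T' * (F k z)ᵀ :=
    ⟨T ⊗ₖ 1, hT.kronecker .one,
      fun k x =>
        (U * ((1 : Matrix (Fin p) (Fin p) ℝ) ⊗ₖ replicateCol Unit (φ x))).submatrix (·, k) id,
      funext₂ fun x z => (hK x z).trans (ptrace_mul_kronecker_vecMulVec_mul_transpose ..)⟩
  have hK_psd : IsPosSemidefKernel fun x z => ∑ k, F k x * T' * (F k z)ᵀ :=
    .sum _ fun k _ => .mul_mul_transpose hT' (F k)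
  refine ⟨fun x z => ?_, hK_psd⟩
  rw [transpose_sum]
  refine Finset.sum_congr rfl fun k _ => ?_
  rw [transpose_mul, transpose_mul, transpose_transpose, (isHermitian_iff_isSymm.mp hT'.1).eq,
    Matrix.mul_assoc]
end

section
/- For an entangled kernel with symmetric U whose N×N blocks U_{ij} are all symmetric, T = 𝟙_p 𝟙_p^⊤ (all-ones matrix), and finite-dimensional feature map φ: X → ℝ^N, the kernel K(x,z) = tr_{ℝ^N}(U(T ⊗ φ(x)φ(z)^⊤)U^⊤) has (l,m) entry equal to ⟨S_l(x), S_m(z)⟩ where S_t(x) = Σ_{k=1}^p U_{tk} φ(x); i.e., such an entangled kernel is transformable with linear-kernel base. -/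
/-! With `T = 𝟙𝟙ᵀ` the middle factor `T ⊗ φ(x)φ(z)ᵀ` is the rank-one matrix `ΦₓΦ_zᵀ` of the
replicated feature vectors `Φ = 𝟙 ⊗ φ`, so `U (T ⊗ φ(x)φ(z)ᵀ) Uᵀ = (UΦₓ)(UΦ_z)ᵀ`, whose
partial trace has `(l, m)` entry `⟨(UΦₓ)_l, (UΦ_z)_m⟩`, and the `l`-th block of `UΦₓ` is
`∑ₖ U_{lk} φ(x)`. -/

open Matrix Kronecker

namespace Matrix

variable {ι κ m n R : Type*}

theorem of_const_one_kronecker_vecMulVec [MulOneClass R] (u : m → R) (v : n → R) :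
    (of fun (_ : ι) (_ : κ) => (1 : R)) ⊗ₖ vecMulVec u v
      = vecMulVec (u ∘ Prod.snd : ι × m → R) (v ∘ Prod.snd : κ × n → R) := by
  ext
  simp only [kroneckerMap_apply, of_apply, vecMulVec_apply, Function.comp_apply, one_mul]

theorem mul_vecMulVec_mul_transpose [CommSemiring R] [Fintype m] [Fintype n]
    (A : Matrix ι m R) (B : Matrix κ n R) (x : m → R) (y : n → R) :
    A * vecMulVec x y * Bᵀ = vecMulVec (A *ᵥ x) (B *ᵥ y) := by
  rw [mul_vecMulVec, vecMulVec_mul, vecMul_transpose]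

theorem comp_mulVec_comp_snd_apply [NonUnitalNonAssocSemiring R] [Fintype κ] [Fintype n]
    (U : Matrix ι κ (Matrix m n R)) (v : n → R) (i : ι) (k : m) :
    (comp ι κ m n R U *ᵥ v ∘ Prod.snd) (i, k) = (∑ j, U i j *ᵥ v) k := by
  simp only [mulVec, dotProduct, comp_apply, Function.comp_apply, Fintype.sum_prod_type, Finset.sum_apply]

end Matrix

theorem ptrace_vecMulVec {p N : ℕ} (a b : Fin p × Fin N → ℝ) (l m : Fin p) :
    ptrace (vecMulVec a b) l m = (fun k => a (l, k)) ⬝ᵥ (fun k => b (m, k)) :=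
  rfl

theorem entangled_supersymmetric_is_transformable_general {X : Type*} {p N : ℕ}
    (U : Fin p → Fin p → Matrix (Fin N) (Fin N) ℝ)
    (φ : X → (Fin N → ℝ)) (x z : X) (l m : Fin p) :
    ptrace ((Matrix.of fun q r : Fin p × Fin N => U q.1 r.1 q.2 r.2) *
        ((Matrix.of fun _ _ : Fin p => (1 : ℝ)) ⊗ₖ vecMulVec (φ x) (φ z)) *
        (Matrix.of fun q r : Fin p × Fin N => U q.1 r.1 q.2 r.2)ᵀ) l m
      = (∑ k : Fin p, U l k *ᵥ φ x) ⬝ᵥ (∑ k : Fin p, U m k *ᵥ φ z) := by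
  change ptrace (comp _ _ _ _ ℝ U * _ * (comp _ _ _ _ ℝ U)ᵀ) l m = _
  rw [of_const_one_kronecker_vecMulVec, mul_vecMulVec_mul_transpose, ptrace_vecMulVec]
  congr 1 <;> ext k <;> exact comp_mulVec_comp_snd_apply U _ _ k

/-- An entangled kernel with symmetric, blockwise-symmetric `U` and `T = 𝟙𝟙ᵀ` is
transformable: its `(l,m)` entry is `⟨S_l(x), S_m(z)⟩` with `S_t(v) = ∑ₖ U_{tk} v`. -/
theorem entangled_supersymmetric_is_transformable {X : Type*} {p N : ℕ}
    (U : Fin p → Fin p → Matrix (Fin N) (Fin N) ℝ)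
    (hUblock : ∀ i j, (U i j)ᵀ = U i j)
    (hUsym : ∀ i j, U i j = U j i)
    (φ : X → (Fin N → ℝ)) (x z : X) (l m : Fin p) :
    ptrace ((Matrix.of fun q r : Fin p × Fin N => U q.1 r.1 q.2 r.2) *
        ((Matrix.of fun _ _ : Fin p => (1 : ℝ)) ⊗ₖ vecMulVec (φ x) (φ z)) *
        (Matrix.of fun q r : Fin p × Fin N => U q.1 r.1 q.2 r.2)ᵀ) l m
      = (∑ k : Fin p, U l k *ᵥ φ x) ⬝ᵥ (∑ k : Fin p, U m k *ᵥ φ z) :=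
  entangled_supersymmetric_is_transformable_general U φ x z l m
end
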